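/- Let X be a real random variable with E[X²] < ∞, independent of a standard Gaussian Z, and let β > 0 be fixed. Then the function σ ↦ P(|X/σ + Z| ≥ β) is differentiable on (0, ∞) and its derivative equals E_X[(X/σ²)·(φ(X/σ + β) − φ(X/σ − β))]. -/

import Mathlib

open MeasureTheory

/-- Standard Gaussian density `φ(z) = e^{-z²/2}/√(2π)`. -/
noncomputable def gaussPDF (z : ℝ) : ℝ := Real.exp (-z ^ 2 / 2) / Real.sqrt (2 * Real.pi)

/-- Soft-thresholding function `η(x; τ) = sign(x)·max(|x| − τ, 0)`. -/
noncomputable def softThr (x τ : ℝ) : ℝ := Real.sign x * max (|x| - τ) 0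

/-- Soft-thresholding risk `r(τ; G) = E_{μ∼G, Z∼N(0,1)}[(η(μ + Z; τ) − μ)²]`. -/
noncomputable def stRisk (G : Measure ℝ) (τ : ℝ) : ℝ :=
  ∫ m, (∫ z, (softThr (m + z) τ - m) ^ 2 * gaussPDF z) ∂G

/-! Writing `g u = P(|u + Z| ≥ β)`, the quantity is `E_X[g(X/σ)]`. Since
`g u = 1 - ∫_{-β-u}^{β-u} φ`, the fundamental theorem of calculus gives
`g' u = φ(u - β) - φ(u + β)`, which is bounded; so `g` is Lipschitz and `s ↦ g(x/s)` has
derivative `g'(x/s)·(-x/s²)`, dominated near `σ` by a multiple of `|x|`, which is integrable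
because `E[X²] < ∞`. Differentiation under the integral sign concludes. -/

lemma gaussPDF_eq_gaussianPDFReal : gaussPDF = ProbabilityTheory.gaussianPDFReal 0 1 := by
  ext z
  simp [gaussPDF, ProbabilityTheory.gaussianPDFReal, div_eq_inv_mul]

lemma continuous_gaussPDF : Continuous gaussPDF := by
  unfold gaussPDF
  fun_prop

lemma integrable_gaussPDF : Integrable gaussPDF := by
  rw [gaussPDF_eq_gaussianPDFReal]
  exact ProbabilityTheory.integrable_gaussianPDFReal 0 1

lemma gaussPDF_nonneg (z : ℝ) : 0 ≤ gaussPDF z := by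
  unfold gaussPDF
  positivity

lemma gaussPDF_le_one (z : ℝ) : gaussPDF z ≤ 1 := by
  refine div_le_one_of_le₀ ?_ (Real.sqrt_nonneg _)
  calc Real.exp (-z ^ 2 / 2) ≤ 1 := Real.exp_le_one_iff.2 (by nlinarith [sq_nonneg z])
    _ ≤ Real.sqrt (2 * Real.pi) := Real.one_le_sqrt.2 (by nlinarith [Real.pi_gt_three])

lemma gaussPDF_neg (z : ℝ) : gaussPDF (-z) = gaussPDF z := by
  simp [gaussPDF]

section OutsideInterval

variable {f : ℝ → ℝ} {β : ℝ}

lemma setIntegral_le_abs_add_eq_integral_sub (hf_int : Integrable f) (hβ : 0 ≤ β) (u : ℝ) :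
    ∫ z in {z | β ≤ |u + z|}, f z = (∫ z, f z) - ∫ z in (-β - u)..(β - u), f z := by
  have hcompl : {z : ℝ | β ≤ |u + z|}ᶜ = Set.Ioo (-β - u) (β - u) := by
    ext z
    simp only [Set.mem_compl_iff, Set.mem_ofPred_eq, not_le, Set.mem_Ioo, abs_lt]
    constructor <;> rintro ⟨h1, h2⟩ <;> constructor <;> linarith
  have hmeas : MeasurableSet {z : ℝ | β ≤ |u + z|} := measurableSet_le measurable_const (by fun_prop)
  have hsplit := integral_add_compl hmeas hf_int
  rw [hcompl, ← integral_Ioc_eq_integral_Ioo, ← intervalIntegral.integral_of_le (by linarith)]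
    at hsplit
  exact eq_sub_of_add_eq hsplit

lemma hasDerivAt_setIntegral_le_abs_add (hf : Continuous f) (hf_int : Integrable f)
    (hβ : 0 ≤ β) (u : ℝ) :
    HasDerivAt (fun u => ∫ z in {z | β ≤ |u + z|}, f z) (f (β - u) - f (-β - u)) u := by
  have hprimitive (t : ℝ) : HasDerivAt (fun t => ∫ z in (0 : ℝ)..t, f z) (f t) t :=
    (hf.integral_hasStrictDerivAt 0 t).hasDerivAt
  have hlower := (hprimitive (-β - u)).comp u ((hasDerivAt_id u).const_sub (-β))
  have hupper := (hprimitive (β - u)).comp u ((hasDerivAt_id u).const_sub β)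
  have hinterval : ∀ v, ∫ z in (-β - v)..(β - v), f z
      = (∫ z in (0 : ℝ)..(β - v), f z) - ∫ z in (0 : ℝ)..(-β - v), f z := fun v =>
    (intervalIntegral.integral_interval_sub_left (hf.intervalIntegrable _ _)
      (hf.intervalIntegrable _ _)).symm
  refine (((hupper.sub hlower).const_sub (∫ z, f z)).congr_deriv (by ring)).congr_of_eventuallyEq
    (.of_forall fun v => ?_)
  dsimp only [Function.comp_apply, Pi.sub_apply]
  rw [setIntegral_le_abs_add_eq_integral_sub hf_int hβ, hinterval]

end OutsideInterval

section CompDiv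

variable {μ : Measure ℝ} [IsFiniteMeasure μ] {g g' : ℝ → ℝ} {C : ℝ}

lemma integrable_comp_div_of_abs_deriv_le (hμ : Integrable (fun x => x) μ)
    (hg : ∀ u, HasDerivAt g (g' u) u) (hg' : ∀ u, |g' u| ≤ C) (σ : ℝ) :
    Integrable (fun x => g (x / σ)) μ := by
  have hg_cont : Continuous g := continuous_iff_continuousAt.2 fun u => (hg u).continuousAt
  have hlipschitz (x : ℝ) : ‖g (x / σ) - g 0‖ ≤ C * ‖x / σ - 0‖ :=
    convex_univ.norm_image_sub_le_of_norm_hasDerivWithin_le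
      (fun u _ => (hg u).hasDerivWithinAt) (fun u _ => hg' u) trivial trivial
  refine Integrable.mono' ((integrable_const ‖g 0‖).add ((hμ.div_const σ).norm.const_mul C))
    (by fun_prop) (ae_of_all _ fun x => ?_)
  have := (norm_sub_norm_le _ _).trans (hlipschitz x)
  simp only [sub_zero, norm_div, Pi.add_apply] at this ⊢
  linarith

lemma hasDerivAt_integral_comp_div (hμ : Integrable (fun x => x) μ)
    (hg : ∀ u, HasDerivAt g (g' u) u) (hg' : ∀ u, |g' u| ≤ C) {σ : ℝ} (hσ : 0 < σ) :
    HasDerivAt (fun s => ∫ x, g (x / s) ∂μ) (∫ x, g' (x / σ) * (-(x / σ ^ 2)) ∂μ) σ := by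
  have hg_cont : Continuous g := continuous_iff_continuousAt.2 fun u => (hg u).continuousAt
  have hg'_meas : Measurable g' := by
    convert measurable_deriv g using 1
    exact funext fun u => (hg u).deriv.symm
  have hdiv (x s : ℝ) (hs : s ≠ 0) : HasDerivAt (fun s => x / s) (-(x / s ^ 2)) s := by
    simpa [div_eq_mul_inv] using (hasDerivAt_inv hs).const_mul x
  have hs_pos {s} (hs : s ∈ Metric.ball σ (σ / 2)) : σ / 2 < s := by
    rw [Metric.mem_ball, Real.dist_eq, abs_lt] at hs
    linarith
  refine (hasDerivAt_integral_of_dominated_loc_of_deriv_le (F := fun s x => g (x / s))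
    (F' := fun s x => g' (x / s) * (-(x / s ^ 2))) (bound := fun x => C * (4 / σ ^ 2 * |x|))
    (Metric.ball_mem_nhds σ (half_pos hσ)) (.of_forall fun s => by fun_prop)
    (integrable_comp_div_of_abs_deriv_le hμ hg hg' σ) (by fun_prop)
    (ae_of_all _ fun x s hs => ?_) ((hμ.abs.const_mul _).const_mul C)
    (ae_of_all _ fun x s hs => ?_)).2
  · have hs' : σ ^ 2 / 4 ≤ s ^ 2 := by nlinarith [hs_pos hs]
    rw [norm_mul, norm_neg, Real.norm_eq_abs, Real.norm_eq_abs, abs_div,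
      abs_of_nonneg (sq_nonneg s)]
    gcongr
    · exact (abs_nonneg _).trans (hg' 0)
    · exact hg' _
    · calc |x| / s ^ 2 ≤ |x| / (σ ^ 2 / 4) :=
            div_le_div_of_nonneg_left (abs_nonneg x) (by positivity) hs'
        _ = 4 / σ ^ 2 * |x| := by ring
  · exact (hg (x / s)).comp s (hdiv x s (by linarith [hs_pos hs, half_pos hσ]))

end CompDiv

/-- for fixed `β > 0`, the function `σ ↦ P(|X/σ + Z| ≥ β)` is differentiable
on `(0, ∞)` with derivative `E_X[(X/σ²)·(φ(X/σ + β) − φ(X/σ − β))]`. -/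
theorem detection_prob_hasDerivAt_sigma (G : Measure ℝ) [IsProbabilityMeasure G]
    (hG : Integrable (fun x => x ^ 2) G) (β : ℝ) (hβ : 0 < β) :
    ∀ σ : ℝ, 0 < σ →
      HasDerivAt (fun s : ℝ => ∫ x, (∫ z in {z : ℝ | β ≤ |x / s + z|}, gaussPDF z) ∂G)
        (∫ x, (x / σ ^ 2) * (gaussPDF (x / σ + β) - gaussPDF (x / σ - β)) ∂G) σ := by
  intro σ hσ
  have hX : Integrable (fun x => x) G :=
    ((memLp_two_iff_integrable_sq (by fun_prop)).2 hG).integrable one_le_two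
  have hderiv := hasDerivAt_integral_comp_div hX
    (hasDerivAt_setIntegral_le_abs_add continuous_gaussPDF integrable_gaussPDF hβ.le)
    (fun u => abs_sub_le_of_nonneg_of_le (gaussPDF_nonneg _) (gaussPDF_le_one _)
      (gaussPDF_nonneg _) (gaussPDF_le_one _)) hσ
  convert hderiv using 3 with x
  rw [← neg_sub (x / σ) β, gaussPDF_neg, show -β - x / σ = -(x / σ + β) by ring, gaussPDF_neg]
  ring
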